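/- Let C be a finite alphabet and X ⊆ C^ℕ a subshift. Then X is sofic if and only if X is ω-regular. -/

import Mathlib

open scoped BigOperators

/-- A language is regular if it is accepted by a DFA with finitely many states. -/
def IsRegularLang {α : Type*} (L : Set (List α)) : Prop :=
  ∃ (σ : Type) (_ : Fintype σ) (M : DFA α σ), ∀ w : List α, w ∈ M.accepts ↔ w ∈ L

/-- Pad a word over `A` to length `M` by prepending the padding symbol `none`. -/
def padOne {A : Type*} (M : ℕ) (w : List A) : List (Option A) :=
  List.replicate (M - w.length) none ++ w.map some

/-- The padded form of a `d`-tuple of words over `A`, as a word over `(A ∪ {#})^d`. -/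
def padTuple {A : Type*} {d : ℕ} (ws : Fin d → List A) : List (Fin d → Option A) :=
  List.ofFn fun j : Fin (Finset.univ.sup fun i : Fin d => (ws i).length) =>
    fun i : Fin d =>
      (padOne (Finset.univ.sup fun i : Fin d => (ws i).length) (ws i)).getD j.val none

/-- An abstract numeration system over the alphabet `A`, encoded by the order isomorphism
`rep : ℕ → L ⊆ A*` enumerating its (infinite) language in increasing order. -/
structure ANS (A : Type*) where
  rep : ℕ → List A
  inj : Function.Injective rep

/-- A set `Y ⊆ ℕ^d` is `S`-recognizable if the padded representations of its members form
a regular language. -/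
def ANS.Recognizable {A : Type*} (S : ANS A) {d : ℕ} (Y : Set (Fin d → ℕ)) : Prop :=
  IsRegularLang { w : List (Fin d → Option A) | ∃ t ∈ Y, w = padTuple fun i => S.rep (t i) }

/-- An ANS is addable if the graph of addition is `S`-recognizable. -/
def ANS.Addable {A : Type*} (S : ANS A) : Prop :=
  S.Recognizable { t : Fin 3 → ℕ | t 0 + t 1 = t 2 }

/-- An ANS is comparable if the relation `≤` is `S`-recognizable. -/
def ANS.Comparable {A : Type*} (S : ANS A) : Prop :=
  S.Recognizable { t : Fin 2 → ℕ | t 0 ≤ t 1 }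

/-- An ANS is regular if `ℕ` (i.e. its language) is `S`-recognizable. -/
def ANS.IsRegularANS {A : Type*} (S : ANS A) : Prop :=
  S.Recognizable (Set.univ : Set (Fin 1 → ℕ))

/-- The unary ANS, with language `0*` ordered by length. -/
def unaryANS : ANS Unit where
  rep := fun n => List.replicate n ()
  inj := fun m n h => by simpa using congrArg List.length h

/-- `x` is `S`-automatic: some DFAO outputs `x n` on input `rep_S n`. -/
def SAutomatic {A C : Type*} (S : ANS A) (x : ℕ → C) : Prop :=
  ∃ (Q : Type) (_ : Fintype Q) (M : DFA A Q) (τ : Q → C),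
    ∀ n : ℕ, τ (M.eval (S.rep n)) = x n

/-- The shift map on one-sided infinite words. -/
def shiftMap {C : Type*} (x : ℕ → C) : ℕ → C := fun n => x (n + 1)

/-- The orbit closure of `x` (closure in the product topology over the discrete alphabet):
`y` belongs to it iff every finite prefix of `y` occurs in `x`. -/
def orbitClosure {C : Type*} (x : ℕ → C) : Set (ℕ → C) :=
  { y | ∀ n : ℕ, ∃ m : ℕ, ∀ i < n, y i = x (m + i) }

/-- A subshift: a shift-invariant subset of `C^ℕ` that is closed in the product topology
over the discrete alphabet (expressed combinatorially). -/
def IsSubshift {C : Type*} (X : Set (ℕ → C)) : Prop :=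
  (∀ x ∈ X, shiftMap x ∈ X) ∧
  ∀ y : ℕ → C, (∀ n : ℕ, ∃ x ∈ X, ∀ i < n, y i = x i) → y ∈ X

/-- The language of a set of infinite words: all finite factors of its elements. -/
def LangOf {C : Type*} (X : Set (ℕ → C)) : Set (List C) :=
  { w | ∃ x ∈ X, ∃ p : ℕ, w = List.ofFn fun i : Fin w.length => x (p + i) }

/-- A word is right special in (the language of) `X` if it has two distinct one-letter
extensions in the language of `X`. -/
def RightSpecial {C : Type*} (X : Set (ℕ → C)) (w : List C) : Prop :=
  ∃ a b : C, a ≠ b ∧ w ++ [a] ∈ LangOf X ∧ w ++ [b] ∈ LangOf X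

/-- The factor complexity of `x`: the number of distinct factors of length `n`. -/
noncomputable def factorComplexity {C : Type*} (x : ℕ → C) (n : ℕ) : ℕ :=
  Set.ncard { w : List C | ∃ p : ℕ, w = List.ofFn fun i : Fin n => x (p + i) }

/-- `T` is a strategy tree witnessing `α ∈ W(X)`: a prefix-closed set of finite words
containing the empty word, in which every word of length `i` has exactly `α i + 1`
one-letter extensions, and all whose infinite branches lie in `X`. -/
def IsStrategyTree {C : Type*} (X : Set (ℕ → C)) (α : ℕ → ℕ) (T : Set (List C)) : Prop :=
  ([] : List C) ∈ T ∧
  (∀ u v : List C, u ++ v ∈ T → u ∈ T) ∧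
  (∀ w ∈ T, Set.ncard { c : C | w ++ [c] ∈ T } = α w.length + 1) ∧
  (∀ y : ℕ → C, (∀ n : ℕ, (List.ofFn fun i : Fin n => y i) ∈ T) → y ∈ X)

/-- The winning shift of `X ⊆ C^ℕ`, a subset of `ℕ^ℕ`. -/
def winningShift {C : Type*} (X : Set (ℕ → C)) : Set (ℕ → ℕ) :=
  { α | ∃ T : Set (List C), IsStrategyTree X α T }

/-- Membership in the winning set of a set `X` of finite words, defined recursively:
`ε ∈ W(X)` iff `ε ∈ X`, and `a :: α ∈ W(X)` iff there is a set of `a + 1` letters `c`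
such that `α` is in the winning set of the left quotient of `X` by `c`. -/
def winningSetMem {C : Type*} : List ℕ → Set (List C) → Prop
  | [], X => [] ∈ X
  | a :: α, X => ∃ S : Finset C, S.card = a + 1 ∧ ∀ c ∈ S, winningSetMem α { w | c :: w ∈ X }

/-- `Σ y = m`: the sum of the letters of `y ∈ ℕ^ℕ` is finite and equals `m`. -/
def sumEq (y : ℕ → ℕ) (m : ℕ) : Prop :=
  (Function.support y).Finite ∧ ∑ᶠ i, y i = m

/-- `Y ⊆ ℕ^ℕ` has finite coding dimension: the sums `Σ y`, `y ∈ Y`, are uniformly bounded. -/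
def FiniteCodingDim (Y : Set (ℕ → ℕ)) : Prop :=
  ∃ d : ℕ, ∀ y ∈ Y, ∀ F : Finset ℕ, ∑ i ∈ F, y i ≤ d

/-- The set `{ν(y) : y ∈ Y, Σy = k} ⊆ ℕᵏ`: nondecreasing `k`-tuples `t` such that the word
whose letter at `j` is the number of occurrences of `j` in `t` belongs to `Y`. -/
def nuSet (Y : Set (ℕ → ℕ)) (k : ℕ) : Set (Fin k → ℕ) :=
  { t | Monotone t ∧ (fun j => Set.ncard { i : Fin k | t i = j }) ∈ Y }

/-- `Y ⊆ ℕ^ℕ` is weakly `S`-codable if `{ν(y) : y ∈ Y, Σy = k}` is `S`-recognizable for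
every `k`. -/
def WeaklySCodable {A : Type*} (S : ANS A) (Y : Set (ℕ → ℕ)) : Prop :=
  ∀ k : ℕ, S.Recognizable (nuSet Y k)

/-- `Y ⊆ ℕ^ℕ` is `S`-codable if it is weakly `S`-codable and has finite coding dimension. -/
def SCodable {A : Type*} (S : ANS A) (Y : Set (ℕ → ℕ)) : Prop :=
  WeaklySCodable S Y ∧ FiniteCodingDim Y

/-- `P_{111}(Y)`: strictly increasing triples `(a, b, c)` such that the word with letter `1`
exactly at positions `a`, `b`, `c` and `0` elsewhere belongs to `Y`. -/
def P111 (Y : Set (ℕ → ℕ)) : Set (Fin 3 → ℕ) :=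
  { t | t 0 < t 1 ∧ t 1 < t 2 ∧
        (fun j => if j = t 0 ∨ j = t 1 ∨ j = t 2 then 1 else 0) ∈ Y }

/-- `P_v(Y)` for a finite word `v` over `ℕ`: strictly increasing tuples `n` such that the
word with letter `v i` at position `n i` and `0` elsewhere belongs to `Y`. -/
def PvSet (v : List ℕ) (Y : Set (ℕ → ℕ)) : Set (Fin v.length → ℕ) :=
  { n | StrictMono n ∧
        (fun j => ∑ i : Fin v.length, if n i = j then v.get i else 0) ∈ Y }

/-- `X` is sofic: the set of label sequences of right-infinite paths in a finite
edge-labeled graph. -/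
def IsSofic {C : Type*} (X : Set (ℕ → C)) : Prop :=
  ∃ (V : Type) (_ : Fintype V) (E : Set (V × C × V)),
    X = { x | ∃ p : ℕ → V, ∀ n : ℕ, (p n, x n, p (n + 1)) ∈ E }

/-- The factor `x[a..b-1]` of an infinite word. -/
def segmentOf {C : Type*} (x : ℕ → C) (a b : ℕ) : List C :=
  List.ofFn fun i : Fin (b - a) => x (a + i)

/-- `U · V^ω`: infinite words that decompose as a word of `U` followed by infinitely many
nonempty words of `V`. -/
def omegaIter {C : Type*} (U V : Set (List C)) : Set (ℕ → C) :=
  { x | ∃ k : ℕ → ℕ, StrictMono k ∧ segmentOf x 0 (k 0) ∈ U ∧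
        ∀ i : ℕ, segmentOf x (k i) (k (i + 1)) ∈ V }

/-- `X ⊆ C^ℕ` is ω-regular: a finite union of sets `U · V^ω` with `U`, `V` regular. -/
def IsOmegaRegular {C : Type*} (X : Set (ℕ → C)) : Prop :=
  ∃ (n : ℕ) (U V : Fin n → Set (List C)),
    (∀ i, IsRegularLang (U i) ∧ IsRegularLang (V i)) ∧
    X = ⋃ i, omegaIter (U i) (V i)

/-- The words `p₁ = a`, `p_{k+1} = p_k bᵏ p_k` (with `a = false`, `b = true`). -/
def pWord : ℕ → List Bool
  | 0 => []
  | 1 => [false]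
  | (k + 2) => pWord (k + 1) ++ List.replicate (k + 1) true ++ pWord (k + 1)

/-- Combinatorial continuity of `φ` on `Y` for product topologies over discrete alphabets:
every finite prefix of `φ y` is determined by a finite prefix of `y`. -/
def ContOn {B C : Type*} (φ : (ℕ → B) → (ℕ → C)) (Y : Set (ℕ → B)) : Prop :=
  ∀ y ∈ Y, ∀ n : ℕ, ∃ m : ℕ, ∀ y' ∈ Y, (∀ i < m, y' i = y i) → ∀ i < n, φ y' i = φ y i

/-! A path in a finite graph visits some vertex `v` infinitely often, so its label lies in
`(paths ending at v) · (loops at v)^ω`; both languages are regular, so sofic shifts are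
ω-regular.

Conversely, the prefix language `P` of `U · V^ω` is the prefix closure of `U · V*`, hence
regular by Myhill–Nerode, and so is the prefix language of a finite union. For a subshift `X`
take the graph whose vertices are the finitely many left quotients of `P`, with an edge
`Q →c c⁻¹Q` whenever `c ∈ Q`. Every word of `X` labels the path through its prefixes; conversely,
if `x` labels a path starting at `u⁻¹P`, every prefix of `u x` lies in `P`, so `u x ∈ X` by
closedness and `x ∈ X` by shift invariance. -/

open Computability

lemma isRegularLang_iff {α : Type*} {L : Language α} : IsRegularLang L ↔ L.IsRegular :=
  exists_congr fun _ => exists_congr fun _ => exists_congr fun _ =>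
    ⟨Set.ext, fun h _ => h ▸ Iff.rfl⟩

namespace Language

variable {α : Type*} {L M : Language α}

theorem IsRegular.of_append_mem_iff {β : Type*} {f : List α → β} (hf : (Set.range f).Finite)
    (G : β → List α → Prop) (h : ∀ w y, w ++ y ∈ L ↔ G (f w) y) : L.IsRegular := by
  refine .of_finite_range_leftQuotient <| (hf.image fun b => {y | G b y}).subset ?_
  rintro _ ⟨w, rfl⟩
  exact ⟨f w, ⟨w, rfl⟩, Set.ext fun y => (h w y).symm⟩

theorem IsRegular.iUnion {ι : Type*} [Finite ι] {L : ι → Language α}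
    (h : ∀ i, (L i).IsRegular) : IsRegular (⋃ i, L i : Set (List α)) :=
  .of_append_mem_iff (f := fun w i => (L i).leftQuotient w)
    ((Set.Finite.pi fun i => (h i).finite_range_leftQuotient).subset
      (by rintro _ ⟨w, rfl⟩ i -; exact ⟨w, rfl⟩))
    (fun F y => ∃ i, y ∈ F i) (fun w y => Set.mem_iUnion)

def prefixes (L : Language α) : Language α := {w | ∃ y, w ++ y ∈ L}

theorem IsRegular.prefixes (h : L.IsRegular) : L.prefixes.IsRegular :=
  .of_append_mem_iff h.finite_range_leftQuotient (fun A y => ∃ t, y ++ t ∈ A)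
    fun w y => exists_congr fun t => by rw [List.append_assoc, mem_leftQuotient]

theorem IsRegular.mul (hL : L.IsRegular) (hM : M.IsRegular) : (L * M).IsRegular := by
  refine .of_append_mem_iff
    (f := fun w => (L.leftQuotient w, M.leftQuotient '' {b | ∃ a ∈ L, w = a ++ b}))
    ((hL.finite_range_leftQuotient.prod hM.finite_range_leftQuotient.finite_subsets).subset ?_)
    (fun p y => (∃ a ∈ p.1, ∃ b ∈ M, a ++ b = y) ∨ ∃ Q ∈ p.2, y ∈ Q) fun w y => ?_
  · rintro _ ⟨w, rfl⟩
    exact ⟨⟨w, rfl⟩, Set.image_subset_range _ _⟩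
  simp only [mem_mul, Set.mem_image, Set.mem_ofPred_eq, mem_leftQuotient]
  constructor
  · rintro ⟨a, ha, b, hb, hab⟩
    rcases List.append_eq_append_iff.mp hab with ⟨a', rfl, rfl⟩ | ⟨c', rfl, rfl⟩
    · exact .inr ⟨_, ⟨a', ⟨a, ha, rfl⟩, rfl⟩, hb⟩
    · exact .inl ⟨c', ha, b, hb, rfl⟩
  · rintro (⟨a, ha, b, hb, rfl⟩ | ⟨_, ⟨b, ⟨a, ha, rfl⟩, rfl⟩, hy⟩)
    · exact ⟨_, ha, b, hb, List.append_assoc _ _ _⟩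
    · exact ⟨a, ha, _, hy, (List.append_assoc _ _ _).symm⟩

theorem append_mem_kstar_iff {w y : List α} :
    w ++ y ∈ L∗ ↔
      (w = [] ∧ y = []) ∨ ∃ b, (∃ a ∈ L∗, w = a ++ b) ∧ y ∈ L.leftQuotient b * L∗ := by
  constructor
  · rintro ⟨Ls, h, hLs⟩
    induction Ls generalizing w with
    | nil => exact .inl (List.append_eq_nil_iff.mp h)
    | cons l Ls ih =>
      have hl := hLs l List.mem_cons_self
      have hLs' : ∀ z ∈ Ls, z ∈ L := fun z hz => hLs z (List.mem_cons_of_mem l hz)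
      rcases List.append_eq_append_iff.mp h with ⟨c, rfl, rfl⟩ | ⟨c, rfl, hc⟩
      · exact .inr ⟨w, ⟨[], nil_mem_kstar L, rfl⟩, append_mem_mul hl (join_mem_kstar hLs')⟩
      · rcases ih hc.symm hLs' with ⟨rfl, rfl⟩ | ⟨b, ⟨a, ha, rfl⟩, hy⟩
        · exact .inr ⟨l ++ [], ⟨[], nil_mem_kstar L, rfl⟩,
            append_mem_mul (a := []) (by simpa using hl) (nil_mem_kstar L)⟩
        · refine .inr ⟨b, ⟨l ++ a, ?_, (List.append_assoc _ _ _).symm⟩, hy⟩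
          exact kstar_mul_kstar L ▸ append_mem_mul (le_kstar (a := L) hl) ha
  · rintro (⟨rfl, rfl⟩ | ⟨b, ⟨a, ha, rfl⟩, hy⟩)
    · exact nil_mem_kstar L
    · obtain ⟨c, hc, d, hd, rfl⟩ := mem_mul.mp hy
      have hbcd : b ++ (c ++ d) ∈ L∗ :=
        List.append_assoc b c d ▸ mul_kstar_le_kstar (a := L) (append_mem_mul hc hd)
      simpa using kstar_mul_kstar L ▸ append_mem_mul ha hbcd

theorem IsRegular.kstar (h : L.IsRegular) : L∗.IsRegular :=
  .of_append_mem_iff (f := fun w => (w = [], L.leftQuotient '' {b | ∃ a ∈ L∗, w = a ++ b}))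
    ((Set.finite_univ.prod h.finite_range_leftQuotient.finite_subsets).subset
      (by rintro _ ⟨w, rfl⟩; exact ⟨trivial, Set.image_subset_range _ _⟩))
    (fun p y => (p.1 ∧ y = []) ∨ ∃ Q ∈ p.2, y ∈ Q * L∗)
    (fun w y => by simp only [append_mem_kstar_iff, Set.exists_mem_image, Set.mem_ofPred_eq])

end Language

section OmegaWords

variable {C : Type*}

lemma segmentOf_eq_take_drop (x : Stream' C) (a b : ℕ) :
    segmentOf x a b = Stream'.take (b - a) (Stream'.drop a x) := by
  apply List.ext_getElem (by simp [segmentOf])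
  intro i _ _
  simp [segmentOf, Stream'.drop, Stream'.get, Nat.add_comm]

lemma segmentOf_drop (x : Stream' C) (n a b : ℕ) :
    segmentOf (Stream'.drop n x) a b = segmentOf x (n + a) (n + b) := by
  simp only [segmentOf_eq_take_drop, Stream'.drop_drop, Nat.add_sub_add_left]

lemma segmentOf_append_stream (u : List C) (z : Stream' C) (a b : ℕ) :
    segmentOf (u ++ₛ z) (u.length + a) (u.length + b) = segmentOf z a b := by
  rw [← segmentOf_drop, Stream'.drop_append_stream]

lemma segmentOf_eq_nil_iff (x : Stream' C) (a b : ℕ) : segmentOf x a b = [] ↔ b ≤ a := by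
  simp [segmentOf, Nat.sub_eq_zero_iff_le]

lemma segmentOf_zero_length_append_stream (u : List C) (z : Stream' C) :
    segmentOf (u ++ₛ z) 0 u.length = u := by
  simp [segmentOf_eq_take_drop, Stream'.take_append_of_le_length]

/-- `V^ω`, encoded as `{ε} · V^ω`. -/
def omegaPow (V : Language C) : Set (Stream' C) := omegaIter {[]} V

variable {U V : Language C} {u v : List C} {x z : Stream' C}

lemma exists_of_mem_omegaPow (hz : z ∈ omegaPow V) :
    ∃ k : ℕ → ℕ, StrictMono k ∧ k 0 = 0 ∧ ∀ i, segmentOf z (k i) (k (i + 1)) ∈ V :=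
  let ⟨k, hk, hk0, hV⟩ := hz
  ⟨k, hk, Nat.le_zero.mp ((segmentOf_eq_nil_iff _ _ _).mp hk0), hV⟩

lemma drop_mem_omegaPow {k : ℕ → ℕ} (hk : StrictMono k)
    (hV : ∀ i, segmentOf x (k i) (k (i + 1)) ∈ V) (j : ℕ) :
    Stream'.drop (k j) x ∈ omegaPow V := by
  have hle : ∀ i, k j ≤ k (j + i) := fun i => hk.monotone (Nat.le_add_right j i)
  refine ⟨fun i => k (j + i) - k j, fun a b hab => ?_, by simp [segmentOf], fun i => ?_⟩
  · have := hk (Nat.add_lt_add_left hab j)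
    have := hle a
    dsimp only
    omega
  · rw [segmentOf_drop, Nat.add_sub_cancel' (hle i), Nat.add_sub_cancel' (hle (i + 1))]
    exact hV (j + i)

lemma append_mem_omegaIter (hu : u ∈ U) (hz : z ∈ omegaPow V) : u ++ₛ z ∈ omegaIter U V := by
  obtain ⟨k, hk, h0, hV⟩ := exists_of_mem_omegaPow hz
  refine ⟨fun i => u.length + k i, fun a b hab => Nat.add_lt_add_left (hk hab) _, ?_,
    fun i => ?_⟩
  · dsimp only
    rw [h0, Nat.add_zero, segmentOf_zero_length_append_stream]
    exact hu
  · rw [segmentOf_append_stream]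
    exact hV i

lemma mem_omegaIter_iff : x ∈ omegaIter U V ↔ ∃ u ∈ U, ∃ z ∈ omegaPow V, x = u ++ₛ z := by
  refine ⟨fun ⟨k, hk, hU, hV⟩ => ⟨_, hU, _, drop_mem_omegaPow hk hV 0, ?_⟩, ?_⟩
  · simp [segmentOf_eq_take_drop]
  · rintro ⟨u, hu, z, hz, rfl⟩
    exact append_mem_omegaIter hu hz

lemma exists_append_of_mem_omegaPow (hz : z ∈ omegaPow V) :
    ∃ v ∈ V, v ≠ [] ∧ ∃ z' ∈ omegaPow V, z = v ++ₛ z' := by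
  obtain ⟨k, hk, h0, hV⟩ := exists_of_mem_omegaPow hz
  refine ⟨_, hV 0, ?_, _, drop_mem_omegaPow hk hV 1, ?_⟩
  · rw [Ne, segmentOf_eq_nil_iff, not_le]
    exact hk Nat.zero_lt_one
  · simp [segmentOf_eq_take_drop, h0]

lemma append_mem_omegaPow (hv : v ∈ V) (hne : v ≠ []) (hz : z ∈ omegaPow V) :
    v ++ₛ z ∈ omegaPow V := by
  obtain ⟨k, hk, h0, hV⟩ := exists_of_mem_omegaPow hz
  have hlen : 0 < v.length := List.length_pos_iff.mpr hne
  refine ⟨fun i => if i = 0 then 0 else v.length + k (i - 1),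
    strictMono_nat_of_lt_succ fun i => ?_, by simp [segmentOf], fun i => ?_⟩
  · rcases i with _ | i
    · simpa using Nat.add_pos_left hlen _
    · simp [hk (Nat.lt_succ_self i)]
  · rcases i with _ | i
    · simp only [if_true, Nat.zero_add, Nat.one_ne_zero, if_false, Nat.sub_self, h0,
        Nat.add_zero, segmentOf_zero_length_append_stream]
      exact hv
    · simp only [Nat.add_one_ne_zero, if_false, Nat.add_sub_cancel, segmentOf_append_stream]
      exact hV i

lemma kstar_append_mem_omegaPow (hv : v ∈ V∗) (hz : z ∈ omegaPow V) :
    v ++ₛ z ∈ omegaPow V := by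
  obtain ⟨L, rfl, hL⟩ := Language.mem_kstar.mp hv
  clear hv
  induction L with
  | nil => exact hz
  | cons w L ih =>
    rw [List.flatten_cons, Stream'.append_append_stream]
    have hL' := ih fun y hy => hL y (List.mem_cons_of_mem w hy)
    rcases eq_or_ne w [] with rfl | hw
    · exact hL'
    · exact append_mem_omegaPow (hL w List.mem_cons_self) hw hL'

end OmegaWords

section Paths

variable {V C : Type*}

def IsPath (E : Set (V × C × V)) : V → List C → V → Prop
  | q, [], r => q = r
  | q, c :: w, r => ∃ q', (q, c, q') ∈ E ∧ IsPath E q' w r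

def pathLang (E : Set (V × C × V)) (S : Set V) (r : V) : Language C :=
  {w | ∃ q ∈ S, IsPath E q w r}

variable {E : Set (V × C × V)}

lemma isPath_append {q r : V} {w y : List C} :
    IsPath E q (w ++ y) r ↔ ∃ q', IsPath E q w q' ∧ IsPath E q' y r := by
  induction w generalizing q with
  | nil => simp [IsPath]
  | cons c w ih =>
    simp only [List.cons_append, IsPath, ih]
    exact ⟨fun ⟨a, h, b, h₁, h₂⟩ => ⟨b, ⟨a, h, h₁⟩, h₂⟩,
      fun ⟨b, ⟨a, h, h₁⟩, h₂⟩ => ⟨a, h, b, h₁, h₂⟩⟩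

lemma isRegular_pathLang [Finite V] (S : Set V) (r : V) : (pathLang E S r).IsRegular :=
  .of_append_mem_iff (f := fun w => {q' | ∃ q ∈ S, IsPath E q w q'}) (Set.toFinite _)
    (fun R y => ∃ q' ∈ R, IsPath E q' y r) fun w y => by
      change (∃ q ∈ S, IsPath E q (w ++ y) r) ↔ _
      simp only [isPath_append, Set.mem_ofPred_eq]
      exact ⟨fun ⟨q, hq, q', h₁, h₂⟩ => ⟨q', ⟨q, hq, h₁⟩, h₂⟩,
        fun ⟨q', ⟨q, hq, h₁⟩, h₂⟩ => ⟨q, hq, q', h₁, h₂⟩⟩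

lemma isPath_segmentOf {p : ℕ → V} {x : Stream' C} (hp : ∀ n, (p n, x n, p (n + 1)) ∈ E)
    {a b : ℕ} (hab : a ≤ b) : IsPath E (p a) (segmentOf x a b) (p b) := by
  obtain ⟨n, rfl⟩ := Nat.exists_eq_add_of_le hab
  rw [segmentOf_eq_take_drop, Nat.add_sub_cancel_left]
  induction n generalizing a with
  | zero => rfl
  | succ n ih =>
    rw [Stream'.take_succ, Stream'.head_drop, Stream'.tail_drop',
      show a + (n + 1) = a + 1 + n by omega]
    exact ⟨p (a + 1), hp a, ih (Nat.le_add_right _ _)⟩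

lemma exists_mem_omegaIter_of_path [Finite V] {p : ℕ → V} {x : Stream' C}
    (hp : ∀ n, (p n, x n, p (n + 1)) ∈ E) :
    ∃ v, x ∈ omegaIter (pathLang E Set.univ v) (pathLang E {v} v) := by
  obtain ⟨v, hv⟩ := Finite.exists_infinite_fiber p
  rw [Set.infinite_coe_iff] at hv
  obtain ⟨k, hk, hkv⟩ : ∃ k : ℕ → ℕ, StrictMono k ∧ ∀ j, p (k j) = v :=
    ⟨_, Nat.nth_strictMono hv, Nat.nth_mem_of_infinite hv⟩
  refine ⟨v, k, hk, ⟨p 0, trivial, ?_⟩, fun j => ⟨v, rfl, ?_⟩⟩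
  · simpa [hkv] using isPath_segmentOf hp (Nat.zero_le (k 0))
  · simpa [hkv] using isPath_segmentOf hp (hk (Nat.lt_succ_self j)).le

lemma exists_path_of_forall_step (R : V → Stream' C → Prop)
    (hR : ∀ q z, R q z → ∃ q', (q, z.head, q') ∈ E ∧ R q' z.tail) {q : V} {z : Stream' C}
    (h : R q z) : ∃ p : ℕ → V, ∀ n, (p n, z n, p (n + 1)) ∈ E := by
  choose next hnext using hR
  let g : (n : ℕ) → {q // R q (z.drop n)} := fun n =>
    Nat.rec ⟨q, h⟩ (fun n s => ⟨next _ _ s.2, by simpa using (hnext _ _ s.2).2⟩) n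
  refine ⟨fun n => (g n).1, fun n => ?_⟩
  have := (hnext _ _ (g n).2).1
  rw [Stream'.head_drop] at this
  exact this

lemma exists_path_of_mem_omegaIter {v : V} {x : Stream' C}
    (hx : x ∈ omegaIter (pathLang E Set.univ v) (pathLang E {v} v)) :
    ∃ p : ℕ → V, ∀ n, (p n, x n, p (n + 1)) ∈ E := by
  obtain ⟨u, ⟨q, -, hq⟩, z, hz, rfl⟩ := mem_omegaIter_iff.mp hx
  refine exists_path_of_forall_step
    (fun q y => ∃ w z, y = w ++ₛ z ∧ IsPath E q w v ∧ z ∈ omegaPow (pathLang E {v} v))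
    ?_ ⟨u, z, rfl, hq, hz⟩
  rintro q _ ⟨w, z, rfl, hw, hz⟩
  -- an empty pending word is replaced by the next (nonempty) loop at `v`
  have : ∃ c w' z', w ++ₛ z = (c :: w') ++ₛ z' ∧ IsPath E q (c :: w') v ∧
      z' ∈ omegaPow (pathLang E {v} v) := by
    rcases w with _ | ⟨c, w'⟩
    · obtain ⟨_ | ⟨c, l⟩, ⟨q', rfl, hl⟩, hne, z', hz', rfl⟩ := exists_append_of_mem_omegaPow hz
      · exact absurd rfl hne
      · exact ⟨c, l, z', rfl, hw ▸ hl, hz'⟩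
    · exact ⟨c, w', z, rfl, hw, hz⟩
  obtain ⟨c, w', z', heq, ⟨q', hedge, hpath⟩, hz'⟩ := this
  rw [heq]
  exact ⟨q', hedge, w', z', rfl, hpath, hz'⟩

end Paths

theorem IsSofic.isOmegaRegular {C : Type*} {X : Set (ℕ → C)} (h : IsSofic X) :
    IsOmegaRegular X := by
  obtain ⟨V, _, E, rfl⟩ := h
  let e := (Fintype.equivFin V).symm
  refine ⟨Fintype.card V, fun i => pathLang E Set.univ (e i), fun i => pathLang E {e i} (e i),
    fun i => ⟨isRegularLang_iff.mpr (isRegular_pathLang _ _),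
      isRegularLang_iff.mpr (isRegular_pathLang _ _)⟩, Set.ext fun x => ?_⟩
  rw [Set.mem_iUnion]
  constructor
  · rintro ⟨p, hp⟩
    obtain ⟨v, hv⟩ := exists_mem_omegaIter_of_path hp
    exact ⟨Fintype.equivFin V v, by simp only [e, Equiv.symm_apply_apply]; exact hv⟩
  · rintro ⟨i, hx⟩
    exact exists_path_of_mem_omegaIter hx

def finitePrefixes {C : Type*} (X : Set (ℕ → C)) : Language C := {w | ∃ z, w ++ₛ z ∈ X}

section Prefixes

variable {C : Type*}

lemma eq_append_take_of_appendStream_eq {w a : List C} {s t : Stream' C}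
    (h : w ++ₛ s = a ++ₛ t) (hle : w.length ≤ a.length) :
    a = w ++ s.take (a.length - w.length) :=
  calc a = (a ++ₛ t).take a.length := by rw [Stream'.take_append_of_le_length _ _ _ le_rfl,
        List.take_length]
    _ = (w ++ₛ s).take (w.length + (a.length - w.length)) := by rw [h, Nat.add_sub_cancel' hle]
    _ = w ++ s.take (a.length - w.length) := (Stream'.append_take ..).symm

lemma finitePrefixes_iUnion {ι : Type*} (X : ι → Set (ℕ → C)) :
    finitePrefixes (⋃ i, X i) = ⋃ i, (finitePrefixes (X i) : Set (List C)) := by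
  ext w
  refine ⟨fun ⟨z, hz⟩ => ?_, fun hw => ?_⟩
  · obtain ⟨i, hi⟩ := Set.mem_iUnion.mp hz
    exact Set.mem_iUnion.mpr ⟨i, z, hi⟩
  · obtain ⟨i, z, hi⟩ := Set.mem_iUnion.mp hw
    exact ⟨z, Set.mem_iUnion.mpr ⟨i, hi⟩⟩

variable {U V : Language C} {z : Stream' C}

lemma exists_kstar_append_of_mem_omegaPow (hz : z ∈ omegaPow V) (n : ℕ) :
    ∃ v ∈ V∗, n ≤ v.length ∧ ∃ z' ∈ omegaPow V, z = v ++ₛ z' := by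
  induction n with
  | zero => exact ⟨[], Language.nil_mem_kstar V, le_rfl, z, hz, rfl⟩
  | succ n ih =>
    obtain ⟨v, hv, hn, z', hz', rfl⟩ := ih
    obtain ⟨v', hv', hne, z'', hz'', rfl⟩ := exists_append_of_mem_omegaPow hz'
    refine ⟨v ++ v', kstar_mul_le_kstar (a := V) (Language.append_mem_mul hv hv'), ?_,
      z'', hz'', (Stream'.append_append_stream _ _ _).symm⟩
    have := List.length_pos_iff.mpr hne
    simp only [List.length_append]
    omega

lemma finitePrefixes_omegaIter (h : (omegaIter U V).Nonempty) :
    finitePrefixes (omegaIter U V) = (U * V∗).prefixes := by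
  ext w
  constructor
  · rintro ⟨s, hs⟩
    obtain ⟨u, hu, z, hz, heq⟩ := mem_omegaIter_iff.mp hs
    obtain ⟨v, hv, hlen, z', -, rfl⟩ := exists_kstar_append_of_mem_omegaPow hz w.length
    rw [← Stream'.append_append_stream] at heq
    refine ⟨_, eq_append_take_of_appendStream_eq heq ?_ ▸ Language.append_mem_mul hu hv⟩
    simp only [List.length_append]
    omega
  · rintro ⟨y, hy⟩
    obtain ⟨u, hu, v, hv, huv⟩ := Language.mem_mul.mp hy
    obtain ⟨x, hx⟩ := h
    obtain ⟨-, -, z, hz, -⟩ := mem_omegaIter_iff.mp hx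
    refine ⟨y ++ₛ z, ?_⟩
    rw [← Stream'.append_append_stream, ← huv, Stream'.append_append_stream]
    exact append_mem_omegaIter hu (kstar_append_mem_omegaPow hv hz)

lemma isRegular_finitePrefixes_omegaIter (hU : U.IsRegular) (hV : V.IsRegular) :
    (finitePrefixes (omegaIter U V)).IsRegular := by
  rcases (omegaIter U V).eq_empty_or_nonempty with h | h
  · rw [h]
    exact .of_append_mem_iff (f := fun _ => ()) (Set.toFinite _) (fun _ _ => False)
      fun _ _ => ⟨fun ⟨_, h⟩ => h, False.elim⟩
  · rw [finitePrefixes_omegaIter h]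
    exact (hU.mul hV.kstar).prefixes

end Prefixes

namespace IsSubshift

variable {C : Type*} {X : Set (ℕ → C)}

lemma drop_mem (hX : IsSubshift X) {x : Stream' C} (hx : x ∈ X) (n : ℕ) :
    x.drop n ∈ X := by
  induction n generalizing x with
  | zero => exact hx
  | succ n ih => exact ih (hX.1 x hx)

lemma mem_of_forall_exists_take_mem (hX : IsSubshift X) {y : Stream' C}
    (h : ∀ n, ∃ m, n ≤ m ∧ y.take m ∈ finitePrefixes X) : y ∈ X :=
  hX.2 y fun n => by
    obtain ⟨m, hnm, z, hz⟩ := h n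
    refine ⟨_, hz, fun i hi => ?_⟩
    change y.get i = (y.take m ++ₛ z).get i
    rw [Stream'.get_append_left _ _ _ (by rw [Stream'.length_take]; omega), Stream'.take_get]

end IsSubshift

theorem IsSubshift.isSofic_of_isRegular_finitePrefixes {C : Type} {X : Set (ℕ → C)}
    (hX : IsSubshift X) (h : (finitePrefixes X).IsRegular) : IsSofic X := by
  set P := finitePrefixes X
  refine ⟨Set.range P.leftQuotient, h.finite_range_leftQuotient.fintype,
    {e | [e.2.1] ∈ e.1.1 ∧ e.2.2.1 = e.1.1.leftQuotient [e.2.1]}, Set.ext fun x => ?_⟩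
  change Stream' C at x
  constructor
  · intro hx
    refine ⟨fun n => ⟨P.leftQuotient (x.take n), x.take n, rfl⟩, fun n => ⟨?_, ?_⟩⟩
    · show x.take n ++ [x.get n] ∈ P
      rw [Stream'.concat_take_get]
      exact ⟨x.drop (n + 1), (Stream'.append_take_drop _ _).symm ▸ hx⟩
    · show P.leftQuotient (x.take (n + 1)) =
        (P.leftQuotient (x.take n)).leftQuotient [x.get n]
      rw [← Language.leftQuotient_append, Stream'.concat_take_get]
  · rintro ⟨p, hp⟩
    obtain ⟨u, hu⟩ := (p 0).2
    have hpn : ∀ n, (p n).1 = P.leftQuotient (u ++ x.take n) := by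
      intro n
      induction n with
      | zero => simpa using hu.symm
      | succ n ih =>
        rw [(hp n).2, ih, ← Language.leftQuotient_append, List.append_assoc]
        exact congrArg _ (congrArg _ Stream'.concat_take_get)
    have hmem : ∀ n, u ++ x.take (n + 1) ∈ P := fun n => by
      have := (hp n).1
      rw [hpn n] at this
      rw [← Stream'.concat_take_get, ← List.append_assoc]
      exact this
    have hux : u ++ₛ x ∈ X := hX.mem_of_forall_exists_take_mem fun n =>
      ⟨u.length + (n + 1), by omega, Stream'.append_take _ u x ▸ hmem n⟩
    have := hX.drop_mem hux u.length
    rw [Stream'.drop_append_stream] at this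
    exact this

theorem IsSubshift.isSofic_of_isOmegaRegular {C : Type} {X : Set (ℕ → C)}
    (hX : IsSubshift X) (h : IsOmegaRegular X) : IsSofic X := by
  obtain ⟨n, U, V, hUV, rfl⟩ := h
  refine hX.isSofic_of_isRegular_finitePrefixes ?_
  rw [finitePrefixes_iUnion]
  exact Language.IsRegular.iUnion fun i => isRegular_finitePrefixes_omegaIter
    (isRegularLang_iff.mp (hUV i).1) (isRegularLang_iff.mp (hUV i).2)

theorem stmt15_general {C : Type} (X : Set (ℕ → C)) (hsub : IsSubshift X) :
    IsSofic X ↔ IsOmegaRegular X :=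
  ⟨IsSofic.isOmegaRegular, hsub.isSofic_of_isOmegaRegular⟩

/-- A subshift over a finite alphabet is sofic iff it is ω-regular. -/
theorem stmt15 {C : Type} [Fintype C] (X : Set (ℕ → C)) (hsub : IsSubshift X) :
    IsSofic X ↔ IsOmegaRegular X :=
  stmt15_general X hsub
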